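/- Let I = I(G) be the edge ideal of a finite simple graph G. For every vertex t_i of G, v(I) ≤ v((I, t_i)) + 1, where (I, t_i) = I + (t_i) is the ideal generated by I and the variable t_i. -/

import Mathlib

open MvPolynomial

attribute [local instance] Classical.propDecidable

/-- The v-number of a graded ideal `I` of a polynomial ring: the least `d ≥ 1` such that
there is a homogeneous polynomial `f` of degree `d` and an associated prime `p` of `S/I`
with `(I : f) = p`; by convention it is `0` when `I` is the ideal generated by the variables. -/
noncomputable def vNumber {K : Type*} [Field K] {σ : Type*}
    (I : Ideal (MvPolynomial σ K)) : ℕ :=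
  if I = Ideal.span (Set.range (X : σ → MvPolynomial σ K)) then 0
  else sInf {d : ℕ | 1 ≤ d ∧ ∃ f : MvPolynomial σ K, f.IsHomogeneous d ∧
    ∃ p ∈ associatedPrimes (MvPolynomial σ K) (MvPolynomial σ K ⧸ I),
      Submodule.colon I (Ideal.span {f}) = p}

/-- A squarefree monomial ideal: an ideal generated by squarefree monomials,
i.e. by products of distinct variables. -/
def IsSquarefreeMonomialIdeal {K : Type*} [Field K] {σ : Type*}
    (I : Ideal (MvPolynomial σ K)) : Prop :=
  ∃ E : Set (Finset σ), I = Ideal.span ((fun e : Finset σ => ∏ i ∈ e, X i) '' E)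

/-- A clutter on the vertex set `Fin s`: a family of edges, none of which contains another. -/
structure Clutter (s : ℕ) where
  edges : Finset (Finset (Fin s))
  antichain : ∀ e ∈ edges, ∀ f ∈ edges, e ⊆ f → e = f

namespace Clutter

variable {s : ℕ} (C : Clutter s)

/-- The edge ideal of a clutter. -/
noncomputable def edgeIdeal (K : Type*) [Field K] : Ideal (MvPolynomial (Fin s) K) :=
  Ideal.span ((fun e : Finset (Fin s) => ∏ i ∈ e, X i) '' C.edges)

/-- A stable (independent) set of a clutter: a set of vertices containing no edge. -/
def Stable (A : Finset (Fin s)) : Prop := ∀ e ∈ C.edges, ¬ (e ⊆ A)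

/-- A maximal stable set of a clutter. -/
def MaximalStable (A : Finset (Fin s)) : Prop :=
  C.Stable A ∧ ∀ B : Finset (Fin s), C.Stable B → A ⊆ B → A = B

/-- The neighbor set `N_C(A)`: all vertices `i` such that `{i} ∪ A` contains an edge. -/
noncomputable def neighborSet (A : Finset (Fin s)) : Finset (Fin s) :=
  Finset.univ.filter (fun i => ∃ e ∈ C.edges, e ⊆ insert i A)

/-- A vertex cover of a clutter: a set of vertices meeting every edge. -/
def IsVertexCover (B : Finset (Fin s)) : Prop := ∀ e ∈ C.edges, ∃ i ∈ e, i ∈ B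

/-- A minimal vertex cover: a vertex cover minimal with respect to inclusion. -/
def IsMinimalVertexCover (B : Finset (Fin s)) : Prop :=
  C.IsVertexCover B ∧ ∀ B' ⊂ B, ¬ C.IsVertexCover B'

/-- The independence number `β₀(C)`: the maximum size of a stable set. -/
noncomputable def indepNum : ℕ := sSup {n : ℕ | ∃ A : Finset (Fin s), C.Stable A ∧ A.card = n}

/-- The independent domination number `i(C)`: the minimum size of a maximal stable set. -/
noncomputable def idomNum : ℕ :=
  sInf {n : ℕ | ∃ A : Finset (Fin s), C.MaximalStable A ∧ A.card = n}

/-- The vertex covering number `α₀(C)`: the minimum size of a vertex cover. -/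
noncomputable def coverNum : ℕ :=
  sInf {n : ℕ | ∃ B : Finset (Fin s), C.IsVertexCover B ∧ B.card = n}

/-- The ideal of covers of a clutter, generated by the monomials of the minimal vertex covers. -/
noncomputable def coverIdeal (K : Type*) [Field K] : Ideal (MvPolynomial (Fin s) K) :=
  Ideal.span ((fun B : Finset (Fin s) => ∏ i ∈ B, X i) '' {B | C.IsMinimalVertexCover B})

/-- The clutter is well-covered if every maximal stable set has maximum cardinality `β₀(C)`. -/
def WellCovered : Prop := ∀ A : Finset (Fin s), C.MaximalStable A → A.card = C.indepNum

/-- Deletion of an edge from a clutter. -/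
def deleteEdge (e : Finset (Fin s)) : Clutter s :=
  ⟨C.edges.erase e, fun a ha b hb hab =>
    C.antichain a (Finset.mem_of_mem_erase ha) b (Finset.mem_of_mem_erase hb) hab⟩

/-- An edge-critical clutter: deleting any edge increases the independence number. -/
def EdgeCritical : Prop := ∀ e ∈ C.edges, C.indepNum < (C.deleteEdge e).indepNum

end Clutter

section Graphs

variable {V : Type*}

/-- The edge ideal of a simple graph. -/
noncomputable def gEdgeIdeal (K : Type*) [Field K] (G : SimpleGraph V) :
    Ideal (MvPolynomial V K) :=
  Ideal.span {m : MvPolynomial V K | ∃ i j : V, G.Adj i j ∧ m = X i * X j}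

/-- A stable (independent) set of vertices of a graph. -/
def gStable (G : SimpleGraph V) (A : Finset V) : Prop := ∀ i ∈ A, ∀ j ∈ A, ¬ G.Adj i j

/-- A maximal stable set of a graph. -/
def gMaximalStable (G : SimpleGraph V) (A : Finset V) : Prop :=
  gStable G A ∧ ∀ B : Finset V, gStable G B → A ⊆ B → A = B

/-- The independence number `β₀(G)`. -/
noncomputable def gIndepNum [Fintype V] (G : SimpleGraph V) : ℕ :=
  sSup {n : ℕ | ∃ A : Finset V, gStable G A ∧ A.card = n}

/-- A maximum stable set: a stable set of maximum cardinality `β₀(G)`. -/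
def gMaximumStable [Fintype V] (G : SimpleGraph V) (A : Finset V) : Prop :=
  gStable G A ∧ A.card = gIndepNum G

/-- The independent domination number `i(G)`: minimum size of a maximal stable set. -/
noncomputable def gIdomNum (G : SimpleGraph V) : ℕ :=
  sInf {n : ℕ | ∃ A : Finset V, gMaximalStable G A ∧ A.card = n}

/-- A well-covered graph: every maximal stable set is a maximum stable set. -/
def gWellCovered [Fintype V] (G : SimpleGraph V) : Prop :=
  ∀ A : Finset V, gMaximalStable G A → A.card = gIndepNum G

/-- The class `W₂`: graphs with at least two vertices in which any two disjoint stable sets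
are contained in two disjoint maximum stable sets. -/
def W2 [Fintype V] (G : SimpleGraph V) : Prop :=
  2 ≤ Fintype.card V ∧ ∀ A B : Finset V, gStable G A → gStable G B → Disjoint A B →
    ∃ A' B' : Finset V, gMaximumStable G A' ∧ gMaximumStable G B' ∧ Disjoint A' B' ∧
      A ⊆ A' ∧ B ⊆ B'

/-- The neighbor set of a set of vertices of a graph: all vertices adjacent to a vertex of `A`. -/
noncomputable def gNeighborSet [Fintype V] (G : SimpleGraph V) (A : Finset V) : Finset V :=
  Finset.univ.filter (fun i => ∃ j ∈ A, G.Adj i j)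

/-- A vertex cover of a graph. -/
def gIsVertexCover (G : SimpleGraph V) (B : Finset V) : Prop :=
  ∀ i j : V, G.Adj i j → i ∈ B ∨ j ∈ B

/-- A minimal vertex cover of a graph. -/
def gIsMinimalVertexCover (G : SimpleGraph V) (B : Finset V) : Prop :=
  gIsVertexCover G B ∧ ∀ B' ⊂ B, ¬ gIsVertexCover G B'

/-- An edge-critical graph: deleting any edge increases the independence number. -/
def gEdgeCritical [Fintype V] (G : SimpleGraph V) : Prop :=
  ∀ i j : V, G.Adj i j → gIndepNum G < gIndepNum (G.deleteEdges {s(i, j)})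

end Graphs

/-!
Write `J = I + (X i)`. Take a homogeneous `f` of degree `v(J)` with `p = (J : f)` prime (when `J`
is the ideal of all variables, `f = 1`). If some neighbour `j` of `i` has `X j ∉ p`, then
`(I : f X j) = p` because `X i X j ∈ I`. Otherwise let `f₀` be `f` with `X i ↦ 0`. The ideal
`(I : X i) = I + (X j : j ∼ i)` is extended from the polynomial ring `R` in the variables
other than `X i`, so `(I : f₀ X i) = ((I : X i) : f₀)` is extended from
`((I : X i) ∩ R : f₀) = p ∩ R` (here `f₀ ∉ p` because `J` is radical), and the extension of a
prime of `R` is prime. In both cases the new witness has degree `v(J) + 1`.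
-/

section Colon

variable {R : Type*} [CommRing R]

theorem Ideal.colon_span_one (I : Ideal R) : I.colon (Ideal.span {(1 : R)}) = I := by
  ext r
  rw [Ideal.mem_colon_span_singleton, mul_one]

theorem Ideal.colon_mem_associatedPrimes {I : Ideal R} {x : R}
    (h : (I.colon (Ideal.span {x})).IsPrime) :
    I.colon (Ideal.span {x}) ∈ associatedPrimes R (R ⧸ I) := by
  refine ⟨h, Ideal.Quotient.mk I x, ?_⟩
  have : (⊥ : Submodule R (R ⧸ I)).colon {Ideal.Quotient.mk I x} =
      I.colon (Ideal.span {x}) := by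
    ext r
    rw [Submodule.mem_colon_singleton, Ideal.mem_colon_span_singleton, Submodule.mem_bot,
      Algebra.smul_def, Ideal.Quotient.algebraMap_eq, ← map_mul, Ideal.Quotient.eq_zero_iff_mem]
  rw [this, h.radical]

theorem Ideal.colon_eq_of_le_of_notMem {I P : Ideal R} (hP : P.IsPrime) {x : R} (hIP : I ≤ P)
    (hx : x ∉ P) (hPI : P ≤ I.colon (Ideal.span {x})) : I.colon (Ideal.span {x}) = P := by
  refine le_antisymm (fun u hu => ?_) hPI
  rw [Ideal.mem_colon_span_singleton] at hu
  exact (hP.mem_or_mem (hIP hu)).resolve_right hx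

theorem Ideal.colon_mul_eq_of_mul_mem {I p : Ideal R} (hp : p.IsPrime) {y z f : R}
    (hyz : y * z ∈ I) (hcolon : (I ⊔ Ideal.span {y}).colon (Ideal.span {f}) = p)
    (hz : z ∉ p) :
    I.colon (Ideal.span {f * z}) = p := by
  ext u
  simp only [← hcolon, Ideal.mem_colon_span_singleton]
  constructor
  · intro hu
    have huz : u * z ∈ p := by
      rw [← hcolon, Ideal.mem_colon_span_singleton, mul_right_comm, mul_assoc]
      exact Ideal.mem_sup_left hu
    have := (hp.mem_or_mem huz).resolve_right hz
    rwa [← hcolon, Ideal.mem_colon_span_singleton] at this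
  · intro hu
    obtain ⟨a, ha, b, hb, hab⟩ := Submodule.mem_sup.1 hu
    obtain ⟨c, rfl⟩ := Ideal.mem_span_singleton'.1 hb
    have : u * (f * z) = a * z + c * (y * z) := by rw [← mul_assoc, ← hab]; ring
    rw [this]
    exact add_mem (Ideal.mul_mem_right _ _ ha) (Ideal.mul_mem_left _ _ hyz)

theorem Ideal.IsRadical.notMem_colon_of_sub_mem {J : Ideal R} (hJ : J.IsRadical) {f g : R}
    (hp : (J.colon (Ideal.span {f})).IsPrime) (hfg : f - g ∈ J) :
    g ∉ J.colon (Ideal.span {f}) := by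
  intro hg
  have hf : f ∈ J.colon (Ideal.span {f}) := by simpa using add_mem hg (Ideal.le_colon hfg)
  have hfJ : f ∈ J := hJ ⟨2, by rw [sq]; exact Ideal.mem_colon_span_singleton.1 hf⟩
  exact hp.ne_top ((Ideal.eq_top_iff_one _).2
    (Ideal.mem_colon_span_singleton.2 (by rwa [one_mul])))

theorem Polynomial.mul_C_mem_map_C_iff {R : Type*} [CommRing R] {L : Ideal R} {r : R}
    {p : Polynomial R} :
    p * Polynomial.C r ∈ L.map Polynomial.C ↔
      p ∈ (L.colon (Ideal.span {r})).map Polynomial.C := by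
  simp only [Ideal.mem_map_C_iff, Polynomial.coeff_mul_C, Ideal.mem_colon_span_singleton]

end Colon

namespace MvPolynomial

variable {σ R : Type*} [CommRing R]

noncomputable def killVars (C : Set σ) : MvPolynomial σ R →ₐ[R] MvPolynomial σ R :=
  aeval fun j => if j ∈ C then 0 else X j

theorem killVars_X (C : Set σ) (j : σ) :
    killVars C (X j : MvPolynomial σ R) = if j ∈ C then 0 else X j :=
  aeval_X _ _

theorem sub_killVars_mem_span_X_image (C : Set σ) (f : MvPolynomial σ R) :
    f - killVars C f ∈ Ideal.span (X '' C) := by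
  induction f using MvPolynomial.induction_on with
  | C a => simp
  | add p q hp hq => simpa [add_sub_add_comm] using add_mem hp hq
  | mul_X p j hp =>
    have hX : X j - killVars C (X j : MvPolynomial σ R) ∈ Ideal.span (X '' C) := by
      rw [killVars_X]
      split_ifs with hj
      · simpa using (Ideal.subset_span (Set.mem_image_of_mem X hj) :
          (X j : MvPolynomial σ R) ∈ Ideal.span (X '' C))
      · simp
    have key : p * X j - killVars C (p * X j) =
        (p - killVars C p) * X j + killVars C p * (X j - killVars C (X j)) := by
      rw [map_mul]; ring
    rw [key]
    exact add_mem (Ideal.mul_mem_right _ _ hp) (Ideal.mul_mem_left _ _ hX)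

theorem prod_X_eq_monomial (e : Finset σ) :
    ∏ j ∈ e, (X j : MvPolynomial σ R) = monomial (∑ j ∈ e, Finsupp.single j 1) 1 := by
  rw [monomial_sum_one]
  rfl

theorem ker_killVars (C : Set σ) :
    RingHom.ker (killVars C : MvPolynomial σ R →ₐ[R] MvPolynomial σ R) =
      Ideal.span (X '' C) := by
  refine le_antisymm (fun f hf => ?_) (Ideal.span_le.2 ?_)
  · simpa [RingHom.mem_ker.1 hf] using sub_killVars_mem_span_X_image C f
  · rintro _ ⟨j, hj, rfl⟩
    simp [killVars_X, hj]

theorem IsHomogeneous.killVars {f : MvPolynomial σ R} {n : ℕ} (hf : f.IsHomogeneous n)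
    (C : Set σ) : (killVars C f).IsHomogeneous n := by
  have hX (j : σ) : (if j ∈ C then 0 else X j : MvPolynomial σ R).IsHomogeneous 1 := by
    split_ifs
    · exact isHomogeneous_zero _ _ _
    · exact isHomogeneous_X _ _
  rw [← one_mul n]
  exact hf.aeval _ hX

theorem isPrime_span_X_image [IsDomain R] (C : Set σ) :
    (Ideal.span (X '' C : Set (MvPolynomial σ R))).IsPrime := by
  rw [← ker_killVars]
  exact RingHom.ker_isPrime _

theorem X_mem_span_X_image_iff [Nontrivial R] {C : Set σ} {j : σ} :
    (X j : MvPolynomial σ R) ∈ Ideal.span (X '' C) ↔ j ∈ C := by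
  refine ⟨fun h => ?_, fun h => Ideal.subset_span ⟨j, h, rfl⟩⟩
  rw [← ker_killVars, RingHom.mem_ker, killVars_X] at h
  by_contra hj
  simp [hj, X_ne_zero] at h

section SplitVariable

variable (i : σ)

noncomputable def splitVarEquiv :
    MvPolynomial σ R ≃ₐ[R] Polynomial (MvPolynomial {j // j ≠ i} R) :=
  (renameEquiv R (Equiv.optionSubtypeNe i).symm).trans (optionEquivLeft R {j // j ≠ i})

theorem splitVarEquiv_rename (w : MvPolynomial {j // j ≠ i} R) :
    splitVarEquiv i (rename Subtype.val w) = Polynomial.C w := by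
  have : ((splitVarEquiv i).toAlgHom.comp (rename Subtype.val) :
      MvPolynomial {j // j ≠ i} R →ₐ[R] _) = Polynomial.CAlgHom := by
    ext ⟨j, hj⟩
    simp [splitVarEquiv, Equiv.optionSubtypeNe_symm_of_ne hj, optionEquivLeft_X_some]
  exact AlgHom.congr_fun this w

variable {i}

theorem map_rename_val_eq_comap (L : Ideal (MvPolynomial {j // j ≠ i} R)) :
    L.map (rename (Subtype.val : {j // j ≠ i} → σ)) =
      (L.map Polynomial.C).comap (splitVarEquiv i) := by
  refine le_antisymm (Ideal.map_le_iff_le_comap.2 fun w hw => ?_) fun x hx => ?_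
  · rw [Ideal.mem_comap, Ideal.mem_comap, splitVarEquiv_rename]
    exact Ideal.mem_map_of_mem _ hw
  · have h : L.map Polynomial.C ≤ (L.map (rename Subtype.val)).comap (splitVarEquiv i).symm :=
      Ideal.map_le_iff_le_comap.2 fun w hw => by
        rw [Ideal.mem_comap, Ideal.mem_comap, ← splitVarEquiv_rename i w,
          AlgEquiv.symm_apply_apply]
        exact Ideal.mem_map_of_mem _ hw
    simpa using h hx

theorem mem_map_rename_val_iff {L : Ideal (MvPolynomial {j // j ≠ i} R)} {x : MvPolynomial σ R} :
    x ∈ L.map (rename Subtype.val) ↔ splitVarEquiv i x ∈ L.map Polynomial.C := by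
  rw [map_rename_val_eq_comap, Ideal.mem_comap]

theorem isPrime_map_rename_val {P : Ideal (MvPolynomial {j // j ≠ i} R)} (hP : P.IsPrime) :
    (P.map (rename (Subtype.val : {j // j ≠ i} → σ))).IsPrime := by
  rw [map_rename_val_eq_comap]
  exact Ideal.comap_isPrime _ _

theorem colon_map_rename_val (L : Ideal (MvPolynomial {j // j ≠ i} R))
    (r : MvPolynomial {j // j ≠ i} R) :
    (L.map (rename Subtype.val)).colon (Ideal.span {rename Subtype.val r}) =
      (L.colon (Ideal.span {r})).map (rename (Subtype.val : {j // j ≠ i} → σ)) := by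
  ext x
  rw [Ideal.mem_colon_span_singleton, mem_map_rename_val_iff, mem_map_rename_val_iff, map_mul,
    splitVarEquiv_rename, Polynomial.mul_C_mem_map_C_iff]

end SplitVariable

end MvPolynomial

section Squarefree

variable {σ K : Type*} [Field K]

theorem IsSquarefreeMonomialIdeal.exists_le_span_X_image_of_notMem
    {M : Ideal (MvPolynomial σ K)} (hM : IsSquarefreeMonomialIdeal M) {u : MvPolynomial σ K}
    (hu : u ∉ M) : ∃ C : Set σ, M ≤ Ideal.span (X '' C) ∧ u ∉ Ideal.span (X '' C) := by
  obtain ⟨E, rfl⟩ := hM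
  have hgen : (fun e : Finset σ => ∏ j ∈ e, (X j : MvPolynomial σ K)) =
      (fun m => monomial m 1) ∘ fun e => ∑ j ∈ e, Finsupp.single j 1 :=
    funext prod_X_eq_monomial
  rw [hgen, Set.image_comp, mem_ideal_span_monomial_image] at hu
  push Not at hu
  obtain ⟨μ, hμ, hμE⟩ := hu
  refine ⟨{j | μ j = 0}, Ideal.span_le.2 ?_, fun h => ?_⟩
  · rintro _ ⟨e, he, rfl⟩
    obtain ⟨j, hje, hj⟩ : ∃ j ∈ e, μ j = 0 := by
      by_contra! h
      refine hμE _ ⟨e, he, rfl⟩ fun k => ?_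
      simp only [Finsupp.coe_finsetSum, Finset.sum_apply, Finsupp.single_apply,
        Finset.sum_ite_eq']
      split_ifs with hk
      · exact Nat.one_le_iff_ne_zero.2 (h k hk)
      · exact Nat.zero_le _
    change ∏ k ∈ e, X k ∈ _
    rw [← Finset.mul_prod_erase e _ hje]
    exact Ideal.mul_mem_right _ _ (Ideal.subset_span ⟨j, hj, rfl⟩)
  · obtain ⟨j, hj, hμj⟩ := (mem_ideal_span_X_image.1 h) μ hμ
    exact hμj hj

theorem IsSquarefreeMonomialIdeal.isRadical {M : Ideal (MvPolynomial σ K)}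
    (hM : IsSquarefreeMonomialIdeal M) : M.IsRadical := by
  rintro u ⟨n, hn⟩
  by_contra hu
  obtain ⟨C, hMC, huC⟩ := hM.exists_le_span_X_image_of_notMem hu
  exact huC ((isPrime_span_X_image C).mem_of_pow_mem n (hMC hn))

theorem IsSquarefreeMonomialIdeal.sup {M N : Ideal (MvPolynomial σ K)}
    (hM : IsSquarefreeMonomialIdeal M) (hN : IsSquarefreeMonomialIdeal N) :
    IsSquarefreeMonomialIdeal (M ⊔ N) := by
  obtain ⟨E, rfl⟩ := hM
  obtain ⟨F, rfl⟩ := hN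
  exact ⟨E ∪ F, by rw [Set.image_union, Ideal.span_union]⟩

theorem isSquarefreeMonomialIdeal_span_X_image (C : Set σ) :
    IsSquarefreeMonomialIdeal (Ideal.span (X '' C : Set (MvPolynomial σ K))) :=
  ⟨(fun j => {j}) '' C, by rw [Set.image_image]; simp⟩

theorem isSquarefreeMonomialIdeal_gEdgeIdeal (G : SimpleGraph σ) :
    IsSquarefreeMonomialIdeal (gEdgeIdeal K G) := by
  refine ⟨{e | ∃ a b, G.Adj a b ∧ e = {a, b}}, congrArg Ideal.span ?_⟩
  ext m
  constructor
  · rintro ⟨a, b, hab, rfl⟩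
    exact ⟨{a, b}, ⟨a, b, hab, rfl⟩, Finset.prod_pair hab.ne⟩
  · rintro ⟨_, ⟨a, b, hab, rfl⟩, rfl⟩
    exact ⟨a, b, hab, Finset.prod_pair hab.ne⟩

end Squarefree

section VNumber

variable {σ K : Type*} [Field K]

theorem vNumber_le_of_isPrime_colon {I : Ideal (MvPolynomial σ K)} {d : ℕ} (hd : 1 ≤ d)
    {f : MvPolynomial σ K} (hf : f.IsHomogeneous d) (hI : (I.colon (Ideal.span {f})).IsPrime) :
    vNumber I ≤ d := by
  unfold vNumber
  split_ifs
  · exact Nat.zero_le d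
  · exact Nat.sInf_le ⟨hd, f, hf, _, Ideal.colon_mem_associatedPrimes hI, rfl⟩

theorem exists_isHomogeneous_vNumber_isPrime_colon {I : Ideal (MvPolynomial σ K)}
    (h : I ≠ Ideal.span (Set.range X) →
      ∃ d, 1 ≤ d ∧ ∃ f : MvPolynomial σ K, f.IsHomogeneous d ∧
        (I.colon (Ideal.span {f})).IsPrime) :
    ∃ f : MvPolynomial σ K, f.IsHomogeneous (vNumber I) ∧
      (I.colon (Ideal.span {f})).IsPrime := by
  unfold vNumber
  split_ifs with hI
  · refine ⟨1, isHomogeneous_one σ K, ?_⟩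
    rw [Ideal.colon_span_one, hI, ← Set.image_univ]
    exact isPrime_span_X_image _
  · obtain ⟨d, hd, f, hf, hfI⟩ := h hI
    have hne : {d : ℕ | 1 ≤ d ∧ ∃ f : MvPolynomial σ K, f.IsHomogeneous d ∧
        ∃ p ∈ associatedPrimes (MvPolynomial σ K) (MvPolynomial σ K ⧸ I),
          I.colon (Ideal.span {f}) = p}.Nonempty :=
      ⟨d, hd, f, hf, _, Ideal.colon_mem_associatedPrimes hfI, rfl⟩
    obtain ⟨-, g, hg, p, hp, hgp⟩ := Nat.sInf_mem hne
    exact ⟨g, hg, hgp ▸ hp.isPrime⟩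

end VNumber

section EdgeIdeal

variable {σ K : Type*} [Field K] (G : SimpleGraph σ)

theorem X_mul_X_mem_gEdgeIdeal {a b : σ} (hab : G.Adj a b) :
    (X a * X b : MvPolynomial σ K) ∈ gEdgeIdeal K G :=
  Ideal.subset_span ⟨a, b, hab, rfl⟩

theorem gEdgeIdeal_le_span_X_image_iff {C : Set σ} :
    gEdgeIdeal K G ≤ Ideal.span (X '' C) ↔ ∀ a b, G.Adj a b → a ∈ C ∨ b ∈ C := by
  constructor
  · intro h a b hab
    simpa only [X_mem_span_X_image_iff] using
      (isPrime_span_X_image C).mem_or_mem (h (X_mul_X_mem_gEdgeIdeal (K := K) G hab))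
  · refine fun h => Ideal.span_le.2 ?_
    rintro _ ⟨a, b, hab, rfl⟩
    rcases h a b hab with ha | hb
    · exact Ideal.mul_mem_right _ _ (Ideal.subset_span ⟨a, ha, rfl⟩)
    · exact Ideal.mul_mem_left _ _ (Ideal.subset_span ⟨b, hb, rfl⟩)

theorem gEdgeIdeal_colon_X (i : σ) :
    (gEdgeIdeal K G).colon (Ideal.span {(X i : MvPolynomial σ K)}) =
      gEdgeIdeal K G ⊔ Ideal.span (X '' {j | G.Adj i j}) := by
  refine le_antisymm (fun u hu => ?_) (sup_le (fun u hu => ?_) (Ideal.span_le.2 ?_))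
  · rw [Ideal.mem_colon_span_singleton] at hu
    by_contra hu'
    obtain ⟨C, hLC, huC⟩ := ((isSquarefreeMonomialIdeal_gEdgeIdeal G).sup
      (isSquarefreeMonomialIdeal_span_X_image _)).exists_le_span_X_image_of_notMem hu'
    have hcover := (gEdgeIdeal_le_span_X_image_iff G).1 (le_sup_left.trans hLC)
    have hnbr (b : σ) (hb : G.Adj i b) : b ∈ C :=
      X_mem_span_X_image_iff.1 (hLC (Ideal.mem_sup_right (Ideal.subset_span ⟨b, hb, rfl⟩)))
    have hIC : gEdgeIdeal K G ≤ Ideal.span (X '' (C \ {i})) := by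
      refine (gEdgeIdeal_le_span_X_image_iff G).2 fun a b hab => ?_
      by_cases ha : a = i
      · subst ha
        exact Or.inr ⟨hnbr b hab, hab.ne.symm⟩
      by_cases hb : b = i
      · subst hb
        exact Or.inl ⟨hnbr a hab.symm, hab.ne⟩
      rcases hcover a b hab with ha' | hb'
      · exact Or.inl ⟨ha', ha⟩
      · exact Or.inr ⟨hb', hb⟩
    rcases (isPrime_span_X_image _).mem_or_mem (hIC hu) with h | h
    · exact huC (Ideal.span_mono (Set.image_mono Set.sdiff_subset) h)
    · exact (X_mem_span_X_image_iff.1 h).2 rfl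
  · rw [Ideal.mem_colon_span_singleton]
    exact Ideal.mul_mem_right _ _ hu
  · rintro _ ⟨j, hj, rfl⟩
    rw [SetLike.mem_coe, Ideal.mem_colon_span_singleton]
    exact X_mul_X_mem_gEdgeIdeal G hj.symm

theorem gEdgeIdeal_le_comap_killVars (C : Set σ) :
    gEdgeIdeal K G ≤ (gEdgeIdeal K G).comap (killVars C) := by
  refine Ideal.span_le.2 ?_
  rintro _ ⟨a, b, hab, rfl⟩
  rw [SetLike.mem_coe, Ideal.mem_comap, map_mul, killVars_X, killVars_X]
  split_ifs <;> simp [X_mul_X_mem_gEdgeIdeal G hab]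

theorem exists_gStable_notMem_forall_adj [Finite σ] (i : σ) :
    ∃ A : Finset σ, i ∉ A ∧ gStable G A ∧ ∀ c ∉ A, c ≠ i → ∃ b ∈ A, G.Adj c b := by
  obtain ⟨A, -, ⟨hiA, hAstable⟩, hAmax⟩ := Finite.exists_le_maximal (α := Finset σ)
    (p := fun A => i ∉ A ∧ gStable G A) (a := ∅) ⟨by simp, by simp [gStable]⟩
  refine ⟨A, hiA, hAstable, fun c hcA hci => ?_⟩
  by_contra! h
  refine hcA (hAmax (y := insert c A) ⟨?_, ?_⟩ (Finset.subset_insert c A)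
    (Finset.mem_insert_self c A))
  · simpa [hci.symm] using hiA
  · intro a ha b hb hab
    rcases Finset.mem_insert.1 ha with rfl | ha' <;> rcases Finset.mem_insert.1 hb with rfl | hb'
    · exact hab.ne rfl
    · exact h b hb' hab
    · exact h a ha' hab.symm
    · exact hAstable a ha' b hb' hab

theorem gEdgeIdeal_sup_X_colon_prod_X {i : σ} {A : Finset σ} (hiA : i ∉ A) (hA : gStable G A)
    (hdom : ∀ c ∉ A, c ≠ i → ∃ b ∈ A, G.Adj c b) :
    (gEdgeIdeal K G ⊔ Ideal.span {X i}).colon (Ideal.span {∏ a ∈ A, (X a : MvPolynomial σ K)}) =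
      Ideal.span (X '' (↑A : Set σ)ᶜ) := by
  refine Ideal.colon_eq_of_le_of_notMem (isPrime_span_X_image _) (sup_le ?_ ?_) ?_
    (Ideal.span_le.2 ?_)
  · refine (gEdgeIdeal_le_span_X_image_iff G).2 fun a b hab => ?_
    by_contra! h
    exact hA a (not_not.1 h.1) b (not_not.1 h.2) hab
  · rw [Ideal.span_le, Set.singleton_subset_iff]
    exact Ideal.subset_span ⟨i, hiA, rfl⟩
  · rw [(isPrime_span_X_image _).prod_mem_iff]
    rintro ⟨a, ha, haA⟩
    exact X_mem_span_X_image_iff.1 haA ha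
  · rintro _ ⟨c, hc, rfl⟩
    rw [SetLike.mem_coe, Ideal.mem_colon_span_singleton]
    by_cases hci : c = i
    · subst hci
      exact Ideal.mul_mem_right _ _ (Ideal.mem_sup_right (Ideal.mem_span_singleton_self _))
    obtain ⟨b, hb, hcb⟩ := hdom c hc hci
    rw [← Finset.mul_prod_erase A _ hb, ← mul_assoc]
    exact Ideal.mem_sup_left (Ideal.mul_mem_right _ _ (X_mul_X_mem_gEdgeIdeal G hcb))

theorem exists_isHomogeneous_isPrime_colon_gEdgeIdeal_sup_X [Finite σ] (i : σ)
    (hJ : gEdgeIdeal K G ⊔ Ideal.span {X i} ≠ Ideal.span (Set.range X)) :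
    ∃ d, 1 ≤ d ∧ ∃ f : MvPolynomial σ K, f.IsHomogeneous d ∧
      ((gEdgeIdeal K G ⊔ Ideal.span {X i}).colon (Ideal.span {f})).IsPrime := by
  obtain ⟨A, hiA, hA, hdom⟩ := exists_gStable_notMem_forall_adj G i
  have hcolon := gEdgeIdeal_sup_X_colon_prod_X (K := K) G hiA hA hdom
  have hAne : A.Nonempty := by
    rw [Finset.nonempty_iff_ne_empty]
    rintro rfl
    rw [Finset.prod_empty, Ideal.colon_span_one] at hcolon
    exact hJ (hcolon.trans (by simp))
  refine ⟨A.card, hAne.card_pos, ∏ a ∈ A, X a, ?_, hcolon ▸ isPrime_span_X_image _⟩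
  simpa using IsHomogeneous.prod A (fun a => X a) (fun _ => 1) fun a _ => isHomogeneous_X K a

end EdgeIdeal

section Step

variable {σ K : Type*} [Field K] (G : SimpleGraph σ) (i : σ)

theorem map_comap_rename_val_gEdgeIdeal_sup_span_X :
    ((gEdgeIdeal K G ⊔ Ideal.span (X '' {j | G.Adj i j})).comap
      (rename (Subtype.val : {j // j ≠ i} → σ))).map (rename Subtype.val) =
      gEdgeIdeal K G ⊔ Ideal.span (X '' {j | G.Adj i j}) := by
  set L := gEdgeIdeal K G ⊔ Ideal.span (X '' {j | G.Adj i j})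
  refine le_antisymm Ideal.map_comap_le ?_
  have hX (j : σ) (hj : G.Adj i j) :
      X j ∈ (L.comap (rename (Subtype.val : {j // j ≠ i} → σ))).map
        (rename Subtype.val) := by
    rw [← rename_X (Subtype.val : {j // j ≠ i} → σ) ⟨j, hj.ne.symm⟩]
    refine Ideal.mem_map_of_mem _ ?_
    rw [Ideal.mem_comap, rename_X]
    exact Ideal.mem_sup_right (Ideal.subset_span ⟨j, hj, rfl⟩)
  refine sup_le (Ideal.span_le.2 ?_) (Ideal.span_le.2 ?_)
  · rintro _ ⟨a, b, hab, rfl⟩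
    by_cases ha : a = i
    · subst ha
      exact Ideal.mul_mem_left _ _ (hX b hab)
    by_cases hb : b = i
    · subst hb
      exact Ideal.mul_mem_right _ _ (hX a hab.symm)
    rw [← rename_X (Subtype.val : {j // j ≠ i} → σ) ⟨a, ha⟩,
      ← rename_X (Subtype.val : {j // j ≠ i} → σ) ⟨b, hb⟩, ← map_mul]
    refine Ideal.mem_map_of_mem _ ?_
    rw [Ideal.mem_comap, map_mul, rename_X, rename_X]
    exact Ideal.mem_sup_left (X_mul_X_mem_gEdgeIdeal G hab)
  · rintro _ ⟨j, hj, rfl⟩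
    exact hX j hj

theorem rename_val_killCompl (f : MvPolynomial σ K) :
    rename (Subtype.val : {j // j ≠ i} → σ) (killCompl (R := K) Subtype.val_injective f) =
      killVars {i} f := by
  have : (rename (Subtype.val : {j // j ≠ i} → σ)).comp
      (killCompl (R := K) Subtype.val_injective) = killVars {i} := by
    refine algHom_ext fun j => ?_
    by_cases hj : j = i
    · subst hj
      simp [killCompl, killVars_X]
    · simp [killCompl, killVars_X, hj, Equiv.apply_ofInjective_symm]
  exact AlgHom.congr_fun this f

theorem isPrime_colon_killVars_mul_X {f : MvPolynomial σ K}
    (hp : ((gEdgeIdeal K G ⊔ Ideal.span {X i}).colon (Ideal.span {f})).IsPrime)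
    (hN : ∀ j, G.Adj i j →
      X j ∈ (gEdgeIdeal K G ⊔ Ideal.span {X i}).colon (Ideal.span {f})) :
    ((gEdgeIdeal K G).colon (Ideal.span {killVars {i} f * X i})).IsPrime := by
  set J := gEdgeIdeal K G ⊔ Ideal.span {(X i : MvPolynomial σ K)}
  set p := J.colon (Ideal.span {f})
  set L := gEdgeIdeal K G ⊔ Ideal.span (X '' {j | G.Adj i j})
  set ι := rename (R := K) (Subtype.val : {j // j ≠ i} → σ)
  set r := killCompl (R := K) (Subtype.val_injective (p := fun j => j ≠ i)) f
  have hr : ι r = killVars {i} f := rename_val_killCompl i f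
  have hκ (w : MvPolynomial {j // j ≠ i} K) : killVars {i} (ι w) = ι w := by
    rw [← rename_val_killCompl, killCompl_rename_app]
  have hLp : L ≤ p := sup_le (le_sup_left.trans Ideal.le_colon)
    (Ideal.span_le.2 fun _ ⟨j, hj, hjx⟩ => hjx ▸ hN j hj)
  have hJL : J ≤ L.comap (killVars {i}) := by
    refine sup_le ((gEdgeIdeal_le_comap_killVars G {i}).trans (Ideal.comap_mono le_sup_left)) ?_
    rw [Ideal.span_le, Set.singleton_subset_iff, SetLike.mem_coe, Ideal.mem_comap, killVars_X,
      if_pos (Set.mem_singleton i)]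
    exact zero_mem L
  have hff₀ : f - killVars {i} f ∈ J :=
    Ideal.mem_sup_right (by simpa using sub_killVars_mem_span_X_image {i} f)
  have hf₀ : killVars {i} f ∉ p := ((isSquarefreeMonomialIdeal_gEdgeIdeal G).sup
    (by simpa using isSquarefreeMonomialIdeal_span_X_image (K := K) {i})).isRadical
    |>.notMem_colon_of_sub_mem hp hff₀
  have hcolon₀ : (L.comap ι).colon (Ideal.span {r}) = p.comap ι := by
    ext w
    rw [Ideal.mem_colon_span_singleton, Ideal.mem_comap, Ideal.mem_comap, map_mul, hr]
    refine ⟨fun h => (hp.mem_or_mem (hLp h)).resolve_right hf₀, fun h => ?_⟩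
    have hwf := sub_mem (Ideal.mem_colon_span_singleton.1 h) (Ideal.mul_mem_left _ (ι w) hff₀)
    rw [← mul_sub, sub_sub_cancel] at hwf
    have := hJL hwf
    rwa [Ideal.mem_comap, ← hr, map_mul, hκ, hκ, hr] at this
  have hcolon : (gEdgeIdeal K G).colon (Ideal.span {killVars {i} f * X i}) =
      (p.comap ι).map ι := by
    rw [← hcolon₀, ← hr, ← colon_map_rename_val, map_comap_rename_val_gEdgeIdeal_sup_span_X,
      ← gEdgeIdeal_colon_X]
    ext v
    simp only [Ideal.mem_colon_span_singleton, mul_assoc]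
    rfl
  rw [hcolon]
  exact isPrime_map_rename_val (Ideal.comap_isPrime _ _)

theorem exists_isHomogeneous_succ_isPrime_colon_gEdgeIdeal {d : ℕ} {f : MvPolynomial σ K}
    (hf : f.IsHomogeneous d)
    (hp : ((gEdgeIdeal K G ⊔ Ideal.span {X i}).colon (Ideal.span {f})).IsPrime) :
    ∃ g : MvPolynomial σ K, g.IsHomogeneous (d + 1) ∧
      ((gEdgeIdeal K G).colon (Ideal.span {g})).IsPrime := by
  by_cases hN : ∃ j, G.Adj i j ∧
      X j ∉ (gEdgeIdeal K G ⊔ Ideal.span {X i}).colon (Ideal.span {f})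
  · obtain ⟨j, hij, hj⟩ := hN
    refine ⟨f * X j, hf.mul (isHomogeneous_X K j), ?_⟩
    rwa [Ideal.colon_mul_eq_of_mul_mem hp (X_mul_X_mem_gEdgeIdeal G hij) rfl hj]
  · push Not at hN
    exact ⟨killVars {i} f * X i, (hf.killVars {i}).mul (isHomogeneous_X K i),
      isPrime_colon_killVars_mul_X G i hp hN⟩

end Step

/-- For the edge ideal `I = I(G)` of a graph and any vertex `i`,
`v(I) ≤ v((I, t_i)) + 1`. -/
theorem vNumber_le_vNumber_sup_add_one {K : Type*} [Field K] {s : ℕ}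
    (G : SimpleGraph (Fin s)) (i : Fin s) :
    vNumber (gEdgeIdeal K G) ≤
      vNumber (gEdgeIdeal K G ⊔ Ideal.span {(X i : MvPolynomial (Fin s) K)}) + 1 := by
  obtain ⟨f, hf, hJf⟩ := exists_isHomogeneous_vNumber_isPrime_colon
    (exists_isHomogeneous_isPrime_colon_gEdgeIdeal_sup_X (K := K) G i)
  obtain ⟨g, hg, hIg⟩ := exists_isHomogeneous_succ_isPrime_colon_gEdgeIdeal G i hf hJf
  exact vNumber_le_of_isPrime_colon le_add_self hg hIg
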